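/- arXiv:1608.00292 — 3 statements merged into one kernel-verified Lean document; each statement's English description precedes it below -/
import Mathlib

section
/- Let U be a relatively open subset of C, let V = (a, b) be a nonempty open interval in ℝ, and let x ∈ C × ℝ be any point. Give S = (U × V) \ (F ∪ {x}) the subspace topology from ℝ². Then for every c ∈ U and every point p ∈ ({c} × V) \ (F ∪ {x}), the set ({c} × V) \ (F ∪ {x}) is the quasi-component of p in S, i.e., it equals the intersection of all clopen subsets of S that contain p. -/
/-- `c` is a non-endpoint of the Cantor set: `c ∈ C` and for every `ε > 0` both
`(c - ε, c) ∩ C` and `(c, c + ε) ∩ C` are nonempty. -/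
def IsNonEndpoint (c : ℝ) : Prop :=
  c ∈ cantorSet ∧ ∀ ε > 0,
    (Set.Ioo (c - ε) c ∩ cantorSet).Nonempty ∧ (Set.Ioo c (c + ε) ∩ cantorSet).Nonempty

/-- `f(c) = ∑_{n : d n < c} a n`. -/
noncomputable def fFun (d a : ℕ → ℝ) (c : ℝ) : ℝ := ∑' n, if d n < c then a n else 0

/-- `F`, the closure in `ℝ²` of the graph `{(c, f c) : c ∈ C}`. -/
noncomputable def Fset (d a : ℕ → ℝ) : Set (ℝ × ℝ) :=
  closure {p : ℝ × ℝ | ∃ c ∈ cantorSet, p = (c, fFun d a c)}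

/-!
Above each `c`, the closure `F` of the graph contains only the heights `f c` and
`f (c⁺) = fFunRight d a c`, which differ exactly when `c ∈ D`. A clopen subset of `S` is traced by
a separation `(O₁, O₂)` of `S` by open sets of `ℝ²`. On the vertical line through `c`, the side of
the separation containing a punctured neighbourhood of a height `t` is locally constant in `t`,
hence constant on `V`. Indeed, points just below and just above `t` are joined by vertical
segments in `S` over points of `U` arbitrarily close to `c`: if `(c, t) ∉ F`, any segment near
`(c, t)` works since `F` is closed; if `c ∈ D`, then `f` jumps at `c` and one takes segments to the
right of `c` below `f (c⁺)`, or to the left of `c` above `f c`; otherwise `f` is continuous at `c`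
and one passes through the gap of `F` above a point of `D` close to `c`, which is joined to the
lower side from its right and to the upper side from its left. Conversely, points over different
abscissae are separated by the clopen set `{r | r.1 < s}` for some `s ∉ C` between them, as `C` is
totally disconnected.
-/

open Set Filter Topology

noncomputable def fFunRight (d a : ℕ → ℝ) (c : ℝ) : ℝ := ∑' n, if d n ≤ c then a n else 0

def Sset (d a : ℕ → ℝ) (U : Set ℝ) (v w : ℝ) (x : ℝ × ℝ) : Set (ℝ × ℝ) :=
  (U ×ˢ Ioo v w) \ (Fset d a ∪ {x})

section Sums

variable {a : ℕ → ℝ} (ha : Summable a) (ha0 : ∀ n, 0 ≤ a n)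
include ha ha0

theorem summable_ite (P : ℕ → Prop) [DecidablePred P] :
    Summable fun n => if P n then a n else 0 :=
  ha.of_nonneg_of_le (fun n => by split_ifs <;> simp [ha0]) (fun n => by split_ifs <;> simp [ha0])

theorem tsum_ite_mono {P Q : ℕ → Prop} [DecidablePred P] [DecidablePred Q]
    (h : ∀ n, P n → Q n) :
    ∑' n, (if P n then a n else 0) ≤ ∑' n, (if Q n then a n else 0) := by
  refine (summable_ite ha ha0 P).tsum_le_tsum (fun n => ?_) (summable_ite ha ha0 Q)
  by_cases hP : P n
  · simp [hP, h n hP]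
  · simpa [hP] using ite_nonneg (ha0 n) le_rfl

theorem tendsto_tsum_ite {α : Type*} {l : Filter α} {P : α → ℕ → Prop}
    [∀ y n, Decidable (P y n)] {Q : ℕ → Prop} [DecidablePred Q]
    (h : ∀ n, ∀ᶠ y in l, P y n ↔ Q n) :
    Tendsto (fun y => ∑' n, if P y n then a n else 0) l (𝓝 (∑' n, if Q n then a n else 0)) := by
  refine tendsto_tsum_of_dominated_convergence ha
    (fun n => tendsto_const_nhds.congr' ((h n).mono fun y hy => by simp only [hy]))
    (Eventually.of_forall fun y n => ?_)
  split_ifs <;> simp [abs_of_nonneg, ha0]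

end Sums

section Staircase

variable {d a : ℕ → ℝ} (ha : Summable a) (ha0 : ∀ n, 0 ≤ a n)
include ha ha0

theorem fFun_le_fFunRight (c : ℝ) : fFun d a c ≤ fFunRight d a c :=
  tsum_ite_mono ha ha0 fun _ => le_of_lt

theorem fFunRight_le_fFun_of_lt {c₁ c₂ : ℝ} (h : c₁ < c₂) : fFunRight d a c₁ ≤ fFun d a c₂ :=
  tsum_ite_mono ha ha0 fun _ hn => hn.trans_lt h

omit ha0 in
theorem fFun_lt_fFunRight (ha_pos : ∀ n, 0 < a n) (k : ℕ) :
    fFun d a (d k) < fFunRight d a (d k) := by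
  have ha0 n := (ha_pos n).le
  refine (summable_ite ha ha0 _).tsum_lt_tsum (i := k) (fun n => ?_) (by simp [ha_pos k])
    (summable_ite ha ha0 _)
  by_cases hn : d n < d k
  · simp [hn, hn.le]
  · simpa [hn] using ite_nonneg (ha0 n) le_rfl

omit ha ha0 in
theorem fFun_eq_fFunRight {c : ℝ} (hc : c ∉ range d) : fFun d a c = fFunRight d a c :=
  tsum_congr fun n => if_congr (le_iff_lt_or_eq.trans (or_iff_left fun h => hc ⟨n, h⟩)).symm
    rfl rfl

theorem tendsto_fFun_nhdsLE (c : ℝ) : Tendsto (fFun d a) (𝓝[≤] c) (𝓝 (fFun d a c)) := by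
  refine tendsto_tsum_ite ha ha0 fun n => ?_
  rcases lt_or_ge (d n) c with h | h
  · filter_upwards [nhdsWithin_le_nhds (lt_mem_nhds h)] with y hy using iff_of_true hy h
  · filter_upwards [self_mem_nhdsWithin] with y hy using
      iff_of_false (not_lt.2 ((mem_Iic.1 hy).trans h)) (not_lt.2 h)

theorem tendsto_fFun_nhdsGT (c : ℝ) : Tendsto (fFun d a) (𝓝[>] c) (𝓝 (fFunRight d a c)) := by
  refine tendsto_tsum_ite ha ha0 fun n => ?_
  rcases le_or_gt (d n) c with h | h
  · filter_upwards [self_mem_nhdsWithin] with y hy using iff_of_true (h.trans_lt hy) h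
  · filter_upwards [nhdsWithin_le_nhds (gt_mem_nhds h)] with y hy using
      iff_of_false (not_lt.2 hy.le) (not_le.2 h)

theorem continuousAt_fFun {c : ℝ} (hc : c ∉ range d) : ContinuousAt (fFun d a) c := by
  refine tendsto_tsum_ite ha ha0 fun n => ?_
  rcases lt_or_gt_of_ne fun h => hc ⟨n, h⟩ with h | h
  · filter_upwards [lt_mem_nhds h] with y hy using iff_of_true hy h
  · filter_upwards [gt_mem_nhds h] with y hy using iff_of_false (not_lt.2 hy.le) (not_lt.2 h.le)

theorem continuousAt_fFunRight {c : ℝ} (hc : c ∉ range d) :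
    ContinuousAt (fFunRight d a) c := by
  refine tendsto_tsum_ite ha ha0 fun n => ?_
  rcases lt_or_gt_of_ne fun h => hc ⟨n, h⟩ with h | h
  · filter_upwards [lt_mem_nhds h] with y hy using iff_of_true hy.le h.le
  · filter_upwards [gt_mem_nhds h] with y hy using iff_of_false (not_le.2 hy) (not_le.2 h)

theorem eq_or_eq_of_mem_Fset {c u : ℝ} (h : (c, u) ∈ Fset d a) :
    u = fFun d a c ∨ u = fFunRight d a c := by
  by_contra! hu
  have hlim : Tendsto (fFun d a) (𝓝 c) (𝓝 (fFun d a c) ⊔ 𝓝 (fFunRight d a c)) := by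
    rw [← nhdsLE_sup_nhdsGT]
    exact (tendsto_fFun_nhdsLE ha ha0 c).sup_sup (tendsto_fFun_nhdsGT ha ha0 c)
  have hdisj : Disjoint (𝓝 u) (𝓝 (fFun d a c) ⊔ 𝓝 (fFunRight d a c)) :=
    disjoint_sup_right.2 ⟨disjoint_nhds_nhds.2 hu.1, disjoint_nhds_nhds.2 hu.2⟩
  obtain ⟨W, hW, W', hW', hWW'⟩ := Filter.disjoint_iff.1 hdisj
  obtain ⟨_, ⟨hc₁, hfc₁⟩, c₁, -, rfl⟩ :=
    mem_closure_iff_nhds.1 h _ (prod_mem_nhds (hlim hW') hW)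
  exact hWW'.le_bot ⟨hfc₁, hc₁⟩

end Staircase

structure IsSeparation {X : Type*} [TopologicalSpace X] (S O₁ O₂ : Set X) : Prop where
  isOpen_left : IsOpen O₁
  isOpen_right : IsOpen O₂
  subset_union : S ⊆ O₁ ∪ O₂
  inter_eq_empty : S ∩ (O₁ ∩ O₂) = ∅

namespace IsSeparation

variable {X Y : Type*} [TopologicalSpace X] [TopologicalSpace Y] {S O₁ O₂ : Set X}

theorem symm (h : IsSeparation S O₁ O₂) : IsSeparation S O₂ O₁ :=
  ⟨h.isOpen_right, h.isOpen_left, fun _ hx => (h.subset_union hx).symm,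
    by rw [inter_comm O₂, h.inter_eq_empty]⟩

theorem preimage (h : IsSeparation S O₁ O₂) {f : Y → X} (hf : Continuous f) :
    IsSeparation (f ⁻¹' S) (f ⁻¹' O₁) (f ⁻¹' O₂) :=
  ⟨h.isOpen_left.preimage hf, h.isOpen_right.preimage hf, fun _ hy => h.subset_union hy,
    by rw [← preimage_inter, ← preimage_inter, h.inter_eq_empty, preimage_empty]⟩

theorem exists_of_isClopen {A : Set S} (hA : IsClopen A) :
    ∃ O₁ O₂, IsSeparation S O₁ O₂ ∧ (↑) ⁻¹' O₁ = A := by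
  obtain ⟨O₁, hO₁, h₁⟩ := isOpen_induced_iff.1 hA.isOpen
  obtain ⟨O₂, hO₂, h₂⟩ := isOpen_induced_iff.1 hA.compl.isOpen
  have e₁ (q : S) : q ∈ A ↔ (q : X) ∈ O₁ := by rw [← h₁]; rfl
  have e₂ (q : S) : q ∉ A ↔ (q : X) ∈ O₂ := by rw [← mem_compl_iff, ← h₂]; rfl
  refine ⟨O₁, O₂, ⟨hO₁, hO₂, fun p hp => ?_, ?_⟩, h₁⟩
  · by_cases hpA : (⟨p, hp⟩ : S) ∈ A
    · exact Or.inl ((e₁ _).1 hpA)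
    · exact Or.inr ((e₂ _).1 hpA)
  · exact eq_empty_of_forall_notMem fun p ⟨hp, hp₁, hp₂⟩ =>
      (e₂ ⟨p, hp⟩).2 hp₂ ((e₁ ⟨p, hp⟩).2 hp₁)

theorem subset_or {K : Set X} (h : IsSeparation S O₁ O₂) (hK : IsPreconnected K) (hKS : K ⊆ S) :
    K ⊆ O₁ ∨ K ⊆ O₂ :=
  isPreconnected_iff_subset_of_disjoint.1 hK O₁ O₂ h.isOpen_left h.isOpen_right
    (hKS.trans h.subset_union)
    (subset_empty_iff.1 (h.inter_eq_empty ▸ inter_subset_inter_left _ hKS))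

theorem false_of_isPreconnected {K : Set X} {p q : X} (h : IsSeparation S O₁ O₂)
    (hK : IsPreconnected K) (hKS : K ⊆ S) (hpK : p ∈ K) (hp : p ∈ O₁) (hqK : q ∈ K)
    (hq : q ∈ O₂) : False := by
  rcases h.subset_or hK hKS with hK₁ | hK₂
  · exact h.inter_eq_empty.subset ⟨hKS hqK, hK₁ hqK, hq⟩
  · exact h.inter_eq_empty.subset ⟨hKS hpK, hp, hK₂ hpK⟩

theorem eventually_or {l : Filter X} {ι : Sort*} {p : ι → Prop} {s : ι → Set X}
    (h : IsSeparation S O₁ O₂) (hl : l.HasBasis p s) (hs : ∀ i, p i → IsPreconnected (s i))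
    (hS : ∀ᶠ y in l, y ∈ S) : (∀ᶠ y in l, y ∈ O₁) ∨ ∀ᶠ y in l, y ∈ O₂ := by
  obtain ⟨i, hi, hiS⟩ := hl.eventually_iff.1 hS
  exact (h.subset_or (hs i hi) hiS).imp (fun h₁ => hl.eventually_iff.2 ⟨i, hi, fun _ hy => h₁ hy⟩)
    fun h₂ => hl.eventually_iff.2 ⟨i, hi, fun _ hy => h₂ hy⟩

variable [∀ x : X, (𝓝[≠] x).NeBot]

theorem not_eventually_and {t : X} (h : IsSeparation S O₁ O₂) (hS : ∀ᶠ y in 𝓝[≠] t, y ∈ S)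
    (h₁ : ∀ᶠ y in 𝓝[≠] t, y ∈ O₁) (h₂ : ∀ᶠ y in 𝓝[≠] t, y ∈ O₂) : False := by
  obtain ⟨y, hy⟩ := (hS.and (h₁.and h₂)).exists
  exact h.inter_eq_empty.subset hy

theorem mem_left_of_eventually {t : X} (h : IsSeparation S O₁ O₂) (hS : ∀ᶠ y in 𝓝[≠] t, y ∈ S)
    (ht : t ∈ S) (h₁ : ∀ᶠ y in 𝓝[≠] t, y ∈ O₁) : t ∈ O₁ :=
  (h.subset_union ht).resolve_right fun ht₂ => h.not_eventually_and hS h₁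
    (nhdsWithin_le_nhds (h.isOpen_right.mem_nhds ht₂))

theorem subset_or_of_eventually_nhdsNE [T1Space X] {I : Set X} (h : IsSeparation S O₁ O₂)
    (hI : IsPreconnected I) (hS : ∀ t ∈ I, ∀ᶠ y in 𝓝[≠] t, y ∈ S)
    (hgerm : ∀ t ∈ I, (∀ᶠ y in 𝓝[≠] t, y ∈ O₁) ∨ ∀ᶠ y in 𝓝[≠] t, y ∈ O₂) :
    I ∩ S ⊆ O₁ ∨ I ∩ S ⊆ O₂ := by
  have hG : IsSeparation I {t | ∀ᶠ y in 𝓝[≠] t, y ∈ O₁} {t | ∀ᶠ y in 𝓝[≠] t, y ∈ O₂} :=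
    ⟨isOpen_setOfPred_eventually_nhdsWithin, isOpen_setOfPred_eventually_nhdsWithin, hgerm,
      eq_empty_of_forall_notMem fun t ⟨ht, h₁, h₂⟩ => h.not_eventually_and (hS t ht) h₁ h₂⟩
  exact (hG.subset_or hI subset_rfl).imp
    (fun hI₁ t ⟨ht, htS⟩ => h.mem_left_of_eventually (hS t ht) htS (hI₁ ht))
    (fun hI₂ t ⟨ht, htS⟩ => h.symm.mem_left_of_eventually (hS t ht) htS (hI₂ ht))

end IsSeparation

theorem exists_notMem_cantorSet_of_lt {α β : ℝ} (h : α < β) : ∃ s ∈ Ioo α β, s ∉ cantorSet := by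
  by_contra! hsub
  have hC : IsTotallyDisconnected cantorSet := totallyDisconnectedSpace_subtype_iff.1
    cantorSetHomeomorphNatToBool.symm.totallyDisconnectedSpace
  exact (Ioo_infinite h).nontrivial.not_subsingleton (hC _ hsub isPreconnected_Ioo)

theorem fst_eq_of_forall_isClopen {S : Set (ℝ × ℝ)} (hS : ∀ r ∈ S, r.1 ∈ cantorSet) {p q : S}
    (h : ∀ A : Set S, IsClopen A → p ∈ A → q ∈ A) : (q : ℝ × ℝ).1 = (p : ℝ × ℝ).1 := by
  by_contra hne
  wlog hlt : (p : ℝ × ℝ).1 < (q : ℝ × ℝ).1 generalizing p q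
  · exact this (fun A hA hq => by_contra fun hp => h Aᶜ hA.compl hp hq) (fun e => hne e.symm)
      (lt_of_le_of_ne (not_lt.1 hlt) hne)
  obtain ⟨s, ⟨hps, hsq⟩, hs⟩ := exists_notMem_cantorSet_of_lt hlt
  have hfst : ∀ r : S, (r : ℝ × ℝ).1 ≠ s := fun r hr => hs (hr ▸ hS r r.2)
  have hA : IsClopen {r : S | (r : ℝ × ℝ).1 < s} := by
    have hle : {r : S | (r : ℝ × ℝ).1 < s} = {r : S | (r : ℝ × ℝ).1 ≤ s} :=
      ext fun r => lt_iff_le_and_ne.trans (and_iff_left (hfst r))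
    refine ⟨?_, isOpen_lt (continuous_fst.comp continuous_subtype_val) continuous_const⟩
    exact hle ▸ isClosed_le (continuous_fst.comp continuous_subtype_val) continuous_const
  exact (h _ hA hps).not_gt hsq

def NoSwitch (P₁ P₂ : Set ℝ) (t : ℝ) : Prop :=
  ∀ᶠ u₁ in 𝓝[<] t, ∀ᶠ u₂ in 𝓝[>] t, u₁ ∈ P₁ → u₂ ∉ P₂

theorem NoSwitch.false {P₁ P₂ : Set ℝ} {t : ℝ} (h : NoSwitch P₁ P₂ t)
    (h₁ : ∀ᶠ u in 𝓝[<] t, u ∈ P₁) (h₂ : ∀ᶠ u in 𝓝[>] t, u ∈ P₂) : False := by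
  obtain ⟨u₁, hu₁, h⟩ := (h₁.and h).exists
  obtain ⟨u₂, hu₂, h⟩ := (h₂.and h).exists
  exact h hu₁ hu₂

theorem IsSeparation.eventually_nhdsNE_of_noSwitch {T P₁ P₂ : Set ℝ} {t : ℝ}
    (h : IsSeparation T P₁ P₂) (hT : ∀ᶠ u in 𝓝[≠] t, u ∈ T) (h₁₂ : NoSwitch P₁ P₂ t)
    (h₂₁ : NoSwitch P₂ P₁ t) : (∀ᶠ u in 𝓝[≠] t, u ∈ P₁) ∨ ∀ᶠ u in 𝓝[≠] t, u ∈ P₂ := by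
  rw [← nhdsLT_sup_nhdsGT, eventually_sup] at hT ⊢
  rw [eventually_sup]
  rcases h.eventually_or (nhdsLT_basis t) (fun _ _ => isPreconnected_Ioo) hT.1 with hl | hl <;>
  rcases h.eventually_or (nhdsGT_basis t) (fun _ _ => isPreconnected_Ioo) hT.2 with hr | hr
  · exact Or.inl ⟨hl, hr⟩
  · exact (h₁₂.false hl hr).elim
  · exact (h₂₁.false hl hr).elim
  · exact Or.inr ⟨hl, hr⟩

theorem IsSeparation.false_of_frequently_segment {S O₁ O₂ : Set (ℝ × ℝ)}
    (h : IsSeparation S O₁ O₂) {c u₁ u₂ : ℝ} (hu : u₁ ≤ u₂) (h₁ : (c, u₁) ∈ O₁)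
    (h₂ : (c, u₂) ∈ O₂) (hseg : ∃ᶠ c' in 𝓝 c, {c'} ×ˢ Icc u₁ u₂ ⊆ S) : False := by
  have e₁ : ∀ᶠ c' in 𝓝 c, (c', u₁) ∈ O₁ :=
    (Continuous.prodMk_left u₁).continuousAt.preimage_mem_nhds (h.isOpen_left.mem_nhds h₁)
  have e₂ : ∀ᶠ c' in 𝓝 c, (c', u₂) ∈ O₂ :=
    (Continuous.prodMk_left u₂).continuousAt.preimage_mem_nhds (h.isOpen_right.mem_nhds h₂)
  obtain ⟨c', hseg, h₁, h₂⟩ := (hseg.and_eventually (e₁.and e₂)).exists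
  exact h.false_of_isPreconnected (isPreconnected_singleton.prod isPreconnected_Icc) hseg
    (mk_mem_prod rfl (left_mem_Icc.2 hu)) h₁ (mk_mem_prod rfl (right_mem_Icc.2 hu)) h₂

theorem IsNonEndpoint.frequently_nhdsLT {c : ℝ} (hc : IsNonEndpoint c) :
    ∃ᶠ c' in 𝓝[<] c, c' ∈ cantorSet := by
  refine (nhdsLT_basis c).frequently_iff.2 fun b hb => ?_
  obtain ⟨c', hc', hC⟩ := (hc.2 (c - b) (sub_pos.2 hb)).1
  exact ⟨c', ⟨by linarith [hc'.1], hc'.2⟩, hC⟩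

theorem IsNonEndpoint.frequently_nhdsGT {c : ℝ} (hc : IsNonEndpoint c) :
    ∃ᶠ c' in 𝓝[>] c, c' ∈ cantorSet := by
  refine (nhdsGT_basis c).frequently_iff.2 fun b hb => ?_
  obtain ⟨c', hc', hC⟩ := (hc.2 (b - c) (sub_pos.2 hb)).2
  exact ⟨c', ⟨hc'.1, by linarith [hc'.2]⟩, hC⟩

theorem frequently_mem_inter_ne {l : Filter ℝ} {c : ℝ} {O s : Set ℝ} (hl : l ≤ 𝓝[≠] c)
    (hO : IsOpen O) (hcO : c ∈ O) (hs : ∃ᶠ c' in l, c' ∈ s) (z : ℝ) :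
    ∃ᶠ c' in l, c' ∈ O ∩ s ∧ c' ≠ z := by
  have hO' : ∀ᶠ c' in l, c' ∈ O := hl (nhdsWithin_le_nhds (hO.mem_nhds hcO))
  have hz : ∀ᶠ c' in l, c' ≠ z := hl (nhdsWithin_compl_singleton_le c z self_mem_nhdsWithin)
  exact (hs.and_eventually (hO'.and hz)).mono fun _ ⟨hs, hO, hz⟩ => ⟨⟨hO, hs⟩, hz⟩

section Geometry

variable {d a : ℕ → ℝ} {O : Set ℝ} {O₁ O₂ : Set (ℝ × ℝ)} {v w c t : ℝ} {x : ℝ × ℝ}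

theorem frequently_nhdsNE_mem_range (hd_dense : cantorSet ⊆ closure (range d))
    (hc : c ∈ cantorSet) (hcd : c ∉ range d) : ∃ᶠ c' in 𝓝[≠] c, c' ∈ range d :=
  mem_closure_ne_iff_frequently_within.1 (by rw [sdiff_singleton_eq_self hcd]; exact hd_dense hc)

theorem frequently_nhdsNE_mem_cantorSet (hd_ne : ∀ n, IsNonEndpoint (d n))
    (hd_dense : cantorSet ⊆ closure (range d)) (hc : c ∈ cantorSet) :
    ∃ᶠ c' in 𝓝[≠] c, c' ∈ cantorSet := by
  by_cases hcd : c ∈ range d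
  · obtain ⟨n, rfl⟩ := hcd
    exact (hd_ne n).frequently_nhdsGT.filter_mono (nhdsWithin_mono _ fun _ h => h.ne')
  · exact (frequently_nhdsNE_mem_range hd_dense hc hcd).mono fun _ ⟨n, hn⟩ => hn ▸ (hd_ne n).1

theorem mk_mem_prod_diff {u : ℝ} (hc : c ∈ O ∩ cantorSet) (hu : u ∈ Ioo v w)
    (hF : (c, u) ∉ Fset d a) (hx : (c, u) ≠ x) :
    (c, u) ∈ Sset d a (O ∩ cantorSet) v w x :=
  ⟨⟨hc, hu⟩, fun h => h.elim hF hx⟩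

theorem singleton_prod_Icc_subset {u₁ u₂ : ℝ} (hc : c ∈ O ∩ cantorSet) (hcx : c ≠ x.1)
    (hv : v < u₁) (hw : u₂ < w) (hF : ∀ u ∈ Icc u₁ u₂, (c, u) ∉ Fset d a) :
    {c} ×ˢ Icc u₁ u₂ ⊆ Sset d a (O ∩ cantorSet) v w x := by
  rintro ⟨c', u⟩ ⟨rfl, hu⟩
  exact mk_mem_prod_diff hc ⟨hv.trans_le hu.1, hu.2.trans_lt hw⟩ (hF u hu)
    fun h => hcx (congrArg Prod.fst h)

theorem noSwitch_of_notMem_Fset (hd_ne : ∀ n, IsNonEndpoint (d n))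
    (hd_dense : cantorSet ⊆ closure (range d))
    (hsep : IsSeparation (Sset d a (O ∩ cantorSet) v w x) O₁ O₂) (hO : IsOpen O)
    (hc : c ∈ O ∩ cantorSet) (ht : t ∈ Ioo v w) (htF : (c, t) ∉ Fset d a) :
    NoSwitch (Prod.mk c ⁻¹' O₁) (Prod.mk c ⁻¹' O₂) t := by
  obtain ⟨ε, hε, hball⟩ := Metric.isOpen_iff.1 isClosed_closure.isOpen_compl (c, t) htF
  have hfreq := ((frequently_mem_inter_ne le_rfl hO hc.1
    (frequently_nhdsNE_mem_cantorSet hd_ne hd_dense hc.2) x.1).filter_mono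
    nhdsWithin_le_nhds).and_eventually (Metric.ball_mem_nhds c hε)
  have hnear : Ioo v w ∩ Ioo (t - ε) (t + ε) ∈ 𝓝 t :=
    inter_mem (Ioo_mem_nhds ht.1 ht.2) (Ioo_mem_nhds (by linarith) (by linarith))
  filter_upwards [nhdsWithin_le_nhds hnear, self_mem_nhdsWithin] with u₁ hu₁ hu₁t
  filter_upwards [nhdsWithin_le_nhds hnear, self_mem_nhdsWithin] with u₂ hu₂ hu₂t h₁ h₂
  refine hsep.false_of_frequently_segment (hu₁t.trans hu₂t).le h₁ h₂ (hfreq.mono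
    fun c' ⟨⟨hc'U, hc'x⟩, hc'ε⟩ => singleton_prod_Icc_subset hc'U hc'x hu₁.1.1 hu₂.1.2
      fun u hu => hball ?_)
  rw [← ball_prod_same, Real.ball_eq_Ioo t]
  exact ⟨hc'ε, ordConnected_Ioo.out hu₁.2 hu₂.2 hu⟩

variable (ha : Summable a) (ha0 : ∀ n, 0 ≤ a n)
include ha ha0

theorem notMem_Fset_of_ne {u : ℝ} (h₁ : u ≠ fFun d a c) (h₂ : u ≠ fFunRight d a c) :
    (c, u) ∉ Fset d a :=
  fun h => (eq_or_eq_of_mem_Fset ha ha0 h).elim h₁ h₂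

theorem eventually_nhdsNE_mk_mem (hc : c ∈ O ∩ cantorSet) (ht : t ∈ Ioo v w) :
    ∀ᶠ u in 𝓝[≠] t, (c, u) ∈ Sset d a (O ∩ cantorSet) v w x := by
  have hne (z : ℝ) : ∀ᶠ u in 𝓝[≠] t, u ≠ z :=
    nhdsWithin_compl_singleton_le t z self_mem_nhdsWithin
  filter_upwards [nhdsWithin_le_nhds (Ioo_mem_nhds ht.1 ht.2), hne (fFun d a c),
    hne (fFunRight d a c), hne x.2] with u hu h₁ h₂ h₃
  exact mk_mem_prod_diff hc hu (notMem_Fset_of_ne ha ha0 h₁ h₂) fun h => h₃ (congrArg Prod.snd h)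

theorem frequently_segment_below {u₁ u₂ : ℝ} (hc : IsNonEndpoint c) (hO : IsOpen O)
    (hcO : c ∈ O) (hv : v < u₁) (hw : u₂ < w) (hu₂ : u₂ < fFunRight d a c) :
    ∃ᶠ c' in 𝓝 c, {c'} ×ˢ Icc u₁ u₂ ⊆ Sset d a (O ∩ cantorSet) v w x := by
  have hfreq := (frequently_mem_inter_ne (nhdsWithin_mono _ fun _ h => h.ne') hO hcO
    hc.frequently_nhdsGT x.1).and_eventually self_mem_nhdsWithin
  refine (hfreq.filter_mono nhdsWithin_le_nhds).mono fun c' ⟨⟨hc'U, hc'x⟩, hcc'⟩ =>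
    singleton_prod_Icc_subset hc'U hc'x hv hw fun u hu => ?_
  have hu : u < fFun d a c' := hu.2.trans_lt (hu₂.trans_le (fFunRight_le_fFun_of_lt ha ha0 hcc'))
  exact notMem_Fset_of_ne ha ha0 hu.ne (hu.trans_le (fFun_le_fFunRight ha ha0 c')).ne

theorem frequently_segment_above {u₁ u₂ : ℝ} (hc : IsNonEndpoint c) (hO : IsOpen O)
    (hcO : c ∈ O) (hv : v < u₁) (hw : u₂ < w) (hu₁ : fFun d a c < u₁) :
    ∃ᶠ c' in 𝓝 c, {c'} ×ˢ Icc u₁ u₂ ⊆ Sset d a (O ∩ cantorSet) v w x := by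
  have hfreq := (frequently_mem_inter_ne (nhdsWithin_mono _ fun _ h => h.ne) hO hcO
    hc.frequently_nhdsLT x.1).and_eventually self_mem_nhdsWithin
  refine (hfreq.filter_mono nhdsWithin_le_nhds).mono fun c' ⟨⟨hc'U, hc'x⟩, hc'c⟩ =>
    singleton_prod_Icc_subset hc'U hc'x hv hw fun u hu => ?_
  have hu : fFunRight d a c' < u :=
    ((fFunRight_le_fFun_of_lt ha ha0 hc'c).trans_lt hu₁).trans_le hu.1
  exact notMem_Fset_of_ne ha ha0 ((fFun_le_fFunRight ha ha0 c').trans_lt hu).ne' hu.ne'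

theorem noSwitch_of_eq_fFun
    (hsep : IsSeparation (Sset d a (O ∩ cantorSet) v w x) O₁ O₂) (hO : IsOpen O)
    (hc : IsNonEndpoint c) (hcO : c ∈ O) (hjump : fFun d a c < fFunRight d a c)
    (ht : t ∈ Ioo v w) (htf : t = fFun d a c) :
    NoSwitch (Prod.mk c ⁻¹' O₁) (Prod.mk c ⁻¹' O₂) t := by
  filter_upwards [Ioo_mem_nhdsLT ht.1] with u₁ hu₁
  filter_upwards [Ioo_mem_nhdsGT (lt_min ht.2 (htf ▸ hjump))] with u₂ hu₂ h₁ h₂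
  exact hsep.false_of_frequently_segment (hu₁.2.trans hu₂.1).le h₁ h₂
    (frequently_segment_below ha ha0 hc hO hcO hu₁.1 (hu₂.2.trans_le (min_le_left _ _))
      (hu₂.2.trans_le (min_le_right _ _)))

theorem noSwitch_of_eq_fFunRight
    (hsep : IsSeparation (Sset d a (O ∩ cantorSet) v w x) O₁ O₂) (hO : IsOpen O)
    (hc : IsNonEndpoint c) (hcO : c ∈ O) (hjump : fFun d a c < fFunRight d a c)
    (ht : t ∈ Ioo v w) (htg : t = fFunRight d a c) :
    NoSwitch (Prod.mk c ⁻¹' O₁) (Prod.mk c ⁻¹' O₂) t := by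
  filter_upwards [Ioo_mem_nhdsLT (max_lt ht.1 (htg ▸ hjump))] with u₁ hu₁
  filter_upwards [Ioo_mem_nhdsGT ht.2] with u₂ hu₂ h₁ h₂
  exact hsep.false_of_frequently_segment (hu₁.2.trans hu₂.1).le h₁ h₂
    (frequently_segment_above ha ha0 hc hO hcO ((le_max_left _ _).trans_lt hu₁.1) hu₂.2
      ((le_max_right _ _).trans_lt hu₁.1))

end Geometry

section Crossing

variable {d a : ℕ → ℝ} {O : Set ℝ} {O₁ O₂ : Set (ℝ × ℝ)} {v w c t : ℝ} {x : ℝ × ℝ}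
  (hd_ne : ∀ n, IsNonEndpoint (d n)) (hd_dense : cantorSet ⊆ closure (range d))
  (ha : Summable a) (ha_pos : ∀ n, 0 < a n)
include hd_ne hd_dense ha ha_pos

theorem noSwitch_of_notMem_range
    (hsep : IsSeparation (Sset d a (O ∩ cantorSet) v w x) O₁ O₂) (hO : IsOpen O)
    (hc : c ∈ O ∩ cantorSet) (hcd : c ∉ range d) (ht : t ∈ Ioo v w) (htf : t = fFun d a c) :
    NoSwitch (Prod.mk c ⁻¹' O₁) (Prod.mk c ⁻¹' O₂) t := by
  have ha0 n := (ha_pos n).le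
  filter_upwards [Ioo_mem_nhdsLT ht.1] with u₁ hu₁
  filter_upwards [Ioo_mem_nhdsGT ht.2] with u₂ hu₂ h₁ h₂
  have hf : ∀ᶠ c' in 𝓝 c, u₁ < fFun d a c' :=
    (continuousAt_fFun ha ha0 hcd).eventually (lt_mem_nhds (htf ▸ hu₁.2))
  have hg : ∀ᶠ c' in 𝓝 c, fFunRight d a c' < u₂ :=
    (continuousAt_fFunRight ha ha0 hcd).eventually
      (gt_mem_nhds (fFun_eq_fFunRight hcd ▸ htf ▸ hu₂.1))
  have e₁ : ∀ᶠ c' in 𝓝 c, (c', u₁) ∈ O₁ :=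
    (Continuous.prodMk_left u₁).continuousAt.preimage_mem_nhds (hsep.isOpen_left.mem_nhds h₁)
  have e₂ : ∀ᶠ c' in 𝓝 c, (c', u₂) ∈ O₂ :=
    (Continuous.prodMk_left u₂).continuousAt.preimage_mem_nhds (hsep.isOpen_right.mem_nhds h₂)
  obtain ⟨_, ⟨⟨hmO, m, rfl⟩, hmx⟩, hf, hg, e₁, e₂⟩ :=
    ((frequently_mem_inter_ne le_rfl hO hc.1 (frequently_nhdsNE_mem_range hd_dense hc.2 hcd)
      x.1).and_eventually (nhdsWithin_le_nhds (hf.and (hg.and (e₁.and e₂))))).exists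
  have hjump := fFun_lt_fFunRight (d := d) ha ha_pos m
  obtain ⟨ζ, hζ₁, hζ₂⟩ := exists_between hjump
  have hζ : (d m, ζ) ∈ Sset d a (O ∩ cantorSet) v w x :=
    mk_mem_prod_diff ⟨hmO, (hd_ne m).1⟩ ⟨by linarith [hu₁.1], by linarith [hu₂.2]⟩
      (notMem_Fset_of_ne ha ha0 hζ₁.ne' hζ₂.ne) fun h => hmx (congrArg Prod.fst h)
  rcases hsep.subset_union hζ with hζO | hζO
  · exact hsep.false_of_frequently_segment (by linarith) hζO e₂
      (frequently_segment_above ha ha0 (hd_ne m) hO hmO (by linarith [hu₁.1]) hu₂.2 hζ₁)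
  · exact hsep.false_of_frequently_segment (by linarith) e₁ hζO
      (frequently_segment_below ha ha0 (hd_ne m) hO hmO hu₁.1 (by linarith [hu₂.2]) hζ₂)

theorem noSwitch
    (hsep : IsSeparation (Sset d a (O ∩ cantorSet) v w x) O₁ O₂) (hO : IsOpen O)
    (hc : c ∈ O ∩ cantorSet) (ht : t ∈ Ioo v w) :
    NoSwitch (Prod.mk c ⁻¹' O₁) (Prod.mk c ⁻¹' O₂) t := by
  have ha0 n := (ha_pos n).le
  by_cases htF : (c, t) ∈ Fset d a
  · by_cases hcd : c ∈ range d
    · obtain ⟨k, rfl⟩ := hcd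
      have hjump := fFun_lt_fFunRight (d := d) ha ha_pos k
      rcases eq_or_eq_of_mem_Fset ha ha0 htF with htf | htg
      · exact noSwitch_of_eq_fFun ha ha0 hsep hO (hd_ne k) hc.1 hjump ht htf
      · exact noSwitch_of_eq_fFunRight ha ha0 hsep hO (hd_ne k) hc.1 hjump ht htg
    · refine noSwitch_of_notMem_range hd_ne hd_dense ha ha_pos hsep hO hc hcd ht ?_
      exact (eq_or_eq_of_mem_Fset ha ha0 htF).elim id (·.trans (fFun_eq_fFunRight hcd).symm)
  · exact noSwitch_of_notMem_Fset hd_ne hd_dense hsep hO hc ht htF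

theorem IsSeparation.mem_left_of_fst_eq
    (hsep : IsSeparation (Sset d a (O ∩ cantorSet) v w x) O₁ O₂) (hO : IsOpen O)
    {P Q : ℝ × ℝ} (hP : P ∈ Sset d a (O ∩ cantorSet) v w x)
    (hQ : Q ∈ Sset d a (O ∩ cantorSet) v w x) (hPQ : P.1 = Q.1) (h : P ∈ O₁) :
    Q ∈ O₁ := by
  obtain ⟨c, y⟩ := P
  obtain ⟨c', y'⟩ := Q
  obtain rfl : c = c' := hPQ
  have hc : c ∈ O ∩ cantorSet := hP.1.1
  have hfiber := hsep.preimage (Continuous.prodMk_right c)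
  have hT (t : ℝ) (ht : t ∈ Ioo v w) : ∀ᶠ u in 𝓝[≠] t, (c, u) ∈ Sset d a (O ∩ cantorSet) v w x :=
    eventually_nhdsNE_mk_mem ha (fun n => (ha_pos n).le) hc ht
  rcases hfiber.subset_or_of_eventually_nhdsNE isPreconnected_Ioo hT fun t ht =>
      hfiber.eventually_nhdsNE_of_noSwitch (hT t ht)
        (noSwitch hd_ne hd_dense ha ha_pos hsep hO hc ht)
        (noSwitch hd_ne hd_dense ha ha_pos hsep.symm hO hc ht) with h₁ | h₂
  · exact h₁ ⟨hQ.1.2, hQ⟩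
  · exact (hsep.inter_eq_empty.subset ⟨hP, h, h₂ ⟨hP.1.2, hP⟩⟩).elim

end Crossing

theorem stmt8_general (d a : ℕ → ℝ)
    (hd_ne : ∀ n, IsNonEndpoint (d n)) (hd_dense : cantorSet ⊆ closure (Set.range d))
    (ha_pos : ∀ n, 0 < a n) (ha_sum : ∑' n, a n = 1)
    (U : Set ℝ) (hUopen : ∃ O : Set ℝ, IsOpen O ∧ U = O ∩ cantorSet)
    (v w : ℝ) (x : ℝ × ℝ)
    (c : ℝ)
    (p : ↥((U ×ˢ Set.Ioo v w) \ (Fset d a ∪ {x}))) (hp : (p : ℝ × ℝ).1 = c) :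
    {q : ↥((U ×ˢ Set.Ioo v w) \ (Fset d a ∪ {x})) | (q : ℝ × ℝ).1 = c} =
      ⋂₀ {A : Set ↥((U ×ˢ Set.Ioo v w) \ (Fset d a ∪ {x})) | IsClopen A ∧ p ∈ A} := by
  obtain ⟨O, hO, rfl⟩ := hUopen
  have ha : Summable a := by
    by_contra h
    simp [tsum_eq_zero_of_not_summable h] at ha_sum
  ext q
  refine ⟨fun hq A ⟨hA, hpA⟩ => ?_, fun hq => ?_⟩
  · obtain ⟨O₁, O₂, hsep, rfl⟩ := IsSeparation.exists_of_isClopen hA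
    exact hsep.mem_left_of_fst_eq hd_ne hd_dense ha ha_pos hO p.2 q.2 (hp.trans hq.symm) hpA
  · exact (fst_eq_of_forall_isClopen (fun r hr => hr.1.1.2) fun A hA hpA => hq A ⟨hA, hpA⟩).trans hp

/-- Same as the previous proposition with `F` replaced by `F ∪ {x}` for an arbitrary point
`x ∈ C × ℝ`: for every `c ∈ U` and every point `p` of `({c} × V) \ (F ∪ {x})`, that set is the
quasi-component of `p` in `S = (U × V) \ (F ∪ {x})`. -/
theorem stmt8 (d a : ℕ → ℝ) (hd_inj : Function.Injective d)
    (hd_ne : ∀ n, IsNonEndpoint (d n)) (hd_dense : cantorSet ⊆ closure (Set.range d))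
    (ha_pos : ∀ n, 0 < a n) (ha_sum : ∑' n, a n = 1)
    (U : Set ℝ) (hUsub : U ⊆ cantorSet) (hUopen : ∃ O : Set ℝ, IsOpen O ∧ U = O ∩ cantorSet)
    (v w : ℝ) (hvw : v < w) (x : ℝ × ℝ) (hx : x ∈ cantorSet ×ˢ (Set.univ : Set ℝ))
    (c : ℝ) (hc : c ∈ U)
    (p : ↥((U ×ˢ Set.Ioo v w) \ (Fset d a ∪ {x}))) (hp : (p : ℝ × ℝ).1 = c) :
    {q : ↥((U ×ˢ Set.Ioo v w) \ (Fset d a ∪ {x})) | (q : ℝ × ℝ).1 = c} =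
      ⋂₀ {A : Set ↥((U ×ˢ Set.Ioo v w) \ (Fset d a ∪ {x})) | IsClopen A ∧ p ∈ A} :=
  stmt8_general d a hd_ne hd_dense ha_pos ha_sum U hUopen v w x c p hp
end

section
/- Y is hereditarily disconnected: every connected subset of Y contains at most one point (equivalently, Y with its subspace topology is a totally disconnected space). -/
/-- `Y = (C × ℝ) \ ⋃ₙ cl(Gr(f + qₙ))`, where `(qₙ)` enumerates `ℚ`. -/
noncomputable def Yset (d a : ℕ → ℝ) (q : ℕ → ℚ) : Set (ℝ × ℝ) :=
  (cantorSet ×ˢ (Set.univ : Set ℝ)) \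
    ⋃ n : ℕ, closure {p : ℝ × ℝ | ∃ c ∈ cantorSet, p = (c, fFun d a c + (q n : ℝ))}

lemma preCantorSet_subset_unitInterval' (n : ℕ) : preCantorSet n ⊆ Set.Icc 0 1 := by
  induction n with
  | zero => simp
  | succ n ih =>
    rintro x (⟨y, hy, rfl⟩ | ⟨y, hy, rfl⟩) <;> obtain ⟨h0, h1⟩ := ih hy <;>
      constructor <;> simp only [] <;> linarith

/-- Between two points of `preCantorSet n` at distance more than `(1/3)^n`,
there is a gap point. -/
lemma exists_gap (n : ℕ) : ∀ x ∈ preCantorSet n, ∀ y ∈ preCantorSet n,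
    (1/3 : ℝ)^n < y - x → ∃ z ∈ Set.Ioo x y, z ∉ preCantorSet n := by
  induction n with
  | zero =>
    intro x hx y hy h
    simp only [preCantorSet_zero, Set.mem_Icc] at hx hy
    norm_num at h
    linarith [hx.1, hy.2]
  | succ n ih =>
    intro x hx y hy h
    have hpow : (0:ℝ) < (1/3 : ℝ)^n := by positivity
    rcases hx with ⟨u, hu, rfl⟩ | ⟨u, hu, rfl⟩ <;>
      rcases hy with ⟨v, hv, rfl⟩ | ⟨v, hv, rfl⟩
    · -- both in left third
      obtain ⟨hu0, hu1⟩ := preCantorSet_subset_unitInterval' n hu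
      obtain ⟨hv0, hv1⟩ := preCantorSet_subset_unitInterval' n hv
      obtain ⟨z, hz, hznot⟩ := ih u hu v hv (by
        rw [pow_succ] at h; simp only [] at h; linarith)
      refine ⟨z / 3, ⟨by simp only []; linarith [hz.1], by simp only []; linarith [hz.2]⟩, ?_⟩
      rintro (⟨w, hw, hwz⟩ | ⟨w, hw, hwz⟩)
      · apply hznot
        have : w = z := by field_simp at hwz; linarith
        rwa [this] at hw
      · obtain ⟨hw0, hw1⟩ := preCantorSet_subset_unitInterval' n hw
        simp only [] at hwz
        have : z < 1 := lt_of_lt_of_le hz.2 hv1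
        nlinarith
    · -- x in left third, y in right third: use 1/2
      obtain ⟨hu0, hu1⟩ := preCantorSet_subset_unitInterval' n hu
      obtain ⟨hv0, hv1⟩ := preCantorSet_subset_unitInterval' n hv
      refine ⟨1/2, ⟨by simp only []; linarith, by simp only []; linarith⟩, ?_⟩
      rintro (⟨w, hw, hwz⟩ | ⟨w, hw, hwz⟩) <;>
        obtain ⟨hw0, hw1⟩ := preCantorSet_subset_unitInterval' n hw <;>
        simp only [] at hwz <;> linarith
    · -- x in right third, y in left third: impossible
      obtain ⟨hu0, hu1⟩ := preCantorSet_subset_unitInterval' n hu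
      obtain ⟨hv0, hv1⟩ := preCantorSet_subset_unitInterval' n hv
      exfalso
      have hp1 : (0:ℝ) < (1/3 : ℝ)^(n+1) := by positivity
      simp only [] at h
      linarith
    · -- both in right third
      obtain ⟨hu0, hu1⟩ := preCantorSet_subset_unitInterval' n hu
      obtain ⟨hv0, hv1⟩ := preCantorSet_subset_unitInterval' n hv
      obtain ⟨z, hz, hznot⟩ := ih u hu v hv (by
        rw [pow_succ] at h; simp only [] at h; linarith)
      refine ⟨(2 + z) / 3, ⟨by simp only []; linarith [hz.1], by simp only []; linarith [hz.2]⟩, ?_⟩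
      rintro (⟨w, hw, hwz⟩ | ⟨w, hw, hwz⟩)
      · obtain ⟨hw0, hw1⟩ := preCantorSet_subset_unitInterval' n hw
        simp only [] at hwz
        have : 0 < z := lt_of_le_of_lt hu0 hz.1
        nlinarith
      · apply hznot
        have : w = z := by field_simp at hwz; linarith
        rwa [this] at hw

/-- Preconnected subsets of the Cantor set are subsingletons. -/
lemma cantorSet_preconn_subsingleton {s : Set ℝ} (hs : s ⊆ cantorSet)
    (hc : IsPreconnected s) : s.Subsingleton := by
  intro x hx y hy
  by_contra hne
  wlog hlt : x < y generalizing x y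
  · exact this hy hx (Ne.symm hne) (lt_of_le_of_ne (not_lt.mp hlt) (Ne.symm hne))
  obtain ⟨n, hn⟩ := exists_pow_lt_of_lt_one (by linarith : (0:ℝ) < y - x)
    (by norm_num : (1/3 : ℝ) < 1)
  obtain ⟨z, hz, hznot⟩ := exists_gap n x (Set.mem_iInter.mp (hs hx) n) y
    (Set.mem_iInter.mp (hs hy) n) hn
  have : z ∈ s := hc.ordConnected.out hx hy ⟨le_of_lt hz.1, le_of_lt hz.2⟩
  exact hznot (Set.mem_iInter.mp (hs this) n)

/-- `Y` is hereditarily disconnected: every connected subset of `Y` has at most one point. -/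
theorem stmt11 (d a : ℕ → ℝ) (hd_inj : Function.Injective d)
    (hd_ne : ∀ n, IsNonEndpoint (d n)) (hd_dense : cantorSet ⊆ closure (Set.range d))
    (ha_pos : ∀ n, 0 < a n) (ha_sum : ∑' n, a n = 1)
    (q : ℕ → ℚ) (hq : Function.Surjective q) :
    ∀ s ⊆ Yset d a q, IsPreconnected s → s.Subsingleton := by
  intro s hsY hs p₁ hp₁ p₂ hp₂
  -- first coordinates are equal
  have hfst : ∀ p ∈ s, ∀ p' ∈ s, p.1 = p'.1 := by
    have h1 : Prod.fst '' s ⊆ cantorSet := by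
      rintro _ ⟨p, hp, rfl⟩
      exact ((hsY hp).1).1
    have h2 : (Prod.fst '' s).Subsingleton :=
      cantorSet_preconn_subsingleton h1 (hs.image _ continuous_fst.continuousOn)
    intro p hp p' hp'
    exact h2 ⟨p, hp, rfl⟩ ⟨p', hp', rfl⟩
  -- second coordinates
  by_contra hne
  have hne2 : p₁.2 ≠ p₂.2 := by
    intro h
    exact hne (Prod.ext (hfst p₁ hp₁ p₂ hp₂) h)
  -- wlog p₁.2 < p₂.2
  wlog hlt : p₁.2 < p₂.2 generalizing p₁ p₂
  · exact this hp₂ hp₁ (Ne.symm hne) (Ne.symm hne2)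
      (lt_of_le_of_ne (not_lt.mp hlt) (Ne.symm hne2))
  set c := p₁.1 with hcdef
  have hc : c ∈ cantorSet := ((hsY hp₁).1).1
  obtain ⟨r, hr1, hr2⟩ := exists_rat_btwn (by linarith : p₁.2 - fFun d a c < p₂.2 - fFun d a c)
  obtain ⟨n, rfl⟩ := hq r
  -- (c, fFun d a c + q n) is in snd '' s via ordConnected
  have hsnd : (Prod.snd '' s).OrdConnected :=
    (hs.image _ continuous_snd.continuousOn).ordConnected
  have hmem : fFun d a c + (q n : ℝ) ∈ Prod.snd '' s := by
    apply hsnd.out (Set.mem_image_of_mem _ hp₁) (Set.mem_image_of_mem _ hp₂)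
    constructor <;> linarith
  obtain ⟨p, hp, hpsnd⟩ := hmem
  have hpc : p.1 = c := hfst p hp p₁ hp₁
  have hpY := hsY hp
  apply hpY.2
  refine Set.mem_iUnion.mpr ⟨n, subset_closure ?_⟩
  exact ⟨p.1, hpc ▸ hc, by rw [Prod.ext_iff]; exact ⟨rfl, by rw [hpsnd, hpc]⟩⟩
end

section
/- If Z is a Gδ subset of C × (0,1) (with its subspace topology from ℝ²) such that X₁ ⊆ Z, then there exists a non-endpoint c ∈ C'' such that the entire fiber {c} × (0,1) is contained in Z. (In particular, every completely metrizable subset of C × (0,1) containing X₁ contains a nondegenerate connected set.) -/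
open Topology

/-- The set of endpoints of the middle-thirds Cantor set: points `c ∈ C` such that for some
`ε > 0` the Cantor set misses `(c - ε, c)` or `(c, c + ε)`. -/
def cantorEndpoints : Set ℝ :=
  {c | c ∈ cantorSet ∧ ∃ ε > 0,
    Set.Ioo (c - ε) c ∩ cantorSet = ∅ ∨ Set.Ioo c (c + ε) ∩ cantorSet = ∅}

/-- The non-endpoints `C'' = C \ C'` of the Cantor set. -/
def cantorNonEndpoints : Set ℝ := cantorSet \ cantorEndpoints

/-- `X₁ = (C' × (ℚ ∩ (0,1))) ∪ (C'' × ((0,1) \ ℚ)) ⊆ ℝ²`. -/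
def X1 : Set (ℝ × ℝ) :=
  (cantorEndpoints ×ˢ (Set.range ((↑) : ℚ → ℝ) ∩ Set.Ioo 0 1)) ∪
  (cantorNonEndpoints ×ˢ (Set.Ioo 0 1 \ Set.range ((↑) : ℚ → ℝ)))

section Aux

lemma preCantorSet_subset_unitI : ∀ n, preCantorSet n ⊆ Set.Icc (0:ℝ) 1 := by
  intro n
  induction n with
  | zero => simp
  | succ n ih =>
    rintro x (⟨y, hy, rfl⟩ | ⟨y, hy, rfl⟩) <;>
      obtain ⟨h0, h1⟩ := ih hy <;> constructor <;> dsimp only <;> linarith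

lemma one_mem_cantorSet' : (1:ℝ) ∈ cantorSet := by
  refine Set.mem_iInter.2 fun n => ?_
  induction n with
  | zero => simp
  | succ n ih => exact Or.inr ⟨1, ih, by norm_num⟩

lemma third_mem_cantorSet' {x : ℝ} (hx : x ∈ cantorSet) : x / 3 ∈ cantorSet := by
  refine Set.mem_iInter.2 fun n => ?_
  have hx' := fun n => Set.mem_iInter.1 hx n
  cases n with
  | zero =>
    obtain ⟨h0, h1⟩ := cantorSet_subset_unitInterval hx
    exact ⟨by linarith, by linarith⟩
  | succ n => exact Or.inl ⟨x, hx' n, rfl⟩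

lemma two_add_third_mem_cantorSet' {x : ℝ} (hx : x ∈ cantorSet) : (2 + x) / 3 ∈ cantorSet := by
  refine Set.mem_iInter.2 fun n => ?_
  have hx' := fun n => Set.mem_iInter.1 hx n
  cases n with
  | zero =>
    obtain ⟨h0, h1⟩ := cantorSet_subset_unitInterval hx
    exact ⟨by linarith, by linarith⟩
  | succ n => exact Or.inr ⟨x, hx' n, rfl⟩

lemma cantor_dichotomy' {x : ℝ} (hx : x ∈ cantorSet) :
    (x ≤ 1/3 ∧ 3 * x ∈ cantorSet) ∨ (2/3 ≤ x ∧ 3 * x - 2 ∈ cantorSet) := by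
  have hx' := fun n => Set.mem_iInter.1 hx n
  by_cases h : x < 1/2
  · left
    have key : ∀ n, 3 * x ∈ preCantorSet n := by
      intro n
      rcases hx' (n+1) with ⟨y, hy, hyx⟩ | ⟨y, hy, hyx⟩
      · have : y = 3 * x := by dsimp only at hyx; linarith
        rwa [← this]
      · exfalso
        have := (preCantorSet_subset_unitI n hy).1
        dsimp only at hyx
        linarith
    refine ⟨?_, Set.mem_iInter.2 key⟩
    rcases hx' 1 with ⟨y, hy, hyx⟩ | ⟨y, hy, hyx⟩
    · have := (preCantorSet_subset_unitI 0 hy).2; dsimp only at hyx; linarith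
    · have := (preCantorSet_subset_unitI 0 hy).1; dsimp only at hyx; linarith
  · right
    push_neg at h
    have key : ∀ n, 3 * x - 2 ∈ preCantorSet n := by
      intro n
      rcases hx' (n+1) with ⟨y, hy, hyx⟩ | ⟨y, hy, hyx⟩
      · exfalso
        have := (preCantorSet_subset_unitI n hy).2
        dsimp only at hyx
        linarith
      · have : y = 3 * x - 2 := by dsimp only at hyx; linarith
        rwa [← this]
    refine ⟨?_, Set.mem_iInter.2 key⟩
    rcases hx' 1 with ⟨y, hy, hyx⟩ | ⟨y, hy, hyx⟩
    · have := (preCantorSet_subset_unitI 0 hy).2; dsimp only at hyx; linarith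
    · have := (preCantorSet_subset_unitI 0 hy).1; dsimp only at hyx; linarith

lemma zero_mem_cantorEndpoints : (0:ℝ) ∈ cantorEndpoints := by
  refine ⟨zero_mem_cantorSet, 1, one_pos, Or.inl ?_⟩
  ext y
  simp only [Set.mem_inter_iff, Set.mem_Ioo, Set.mem_empty_iff_false, iff_false, not_and]
  rintro ⟨_, hy⟩ hyC
  exact absurd ((cantorSet_subset_unitInterval hyC).1) (by linarith)

lemma one_mem_cantorEndpoints : (1:ℝ) ∈ cantorEndpoints := by
  refine ⟨one_mem_cantorSet', 1, one_pos, Or.inr ?_⟩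
  ext y
  simp only [Set.mem_inter_iff, Set.mem_Ioo, Set.mem_empty_iff_false, iff_false, not_and]
  rintro ⟨hy, _⟩ hyC
  exact absurd ((cantorSet_subset_unitInterval hyC).2) (by linarith)

lemma cantorEndpoints_third {c : ℝ} (hc : c ∈ cantorEndpoints) : c / 3 ∈ cantorEndpoints := by
  obtain ⟨hcC, ε, hε, hgap⟩ := hc
  have h1 := (cantorSet_subset_unitInterval hcC).1
  have h2 := (cantorSet_subset_unitInterval hcC).2
  refine ⟨third_mem_cantorSet' hcC, min (ε/3) (1/6), by positivity, ?_⟩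
  have key : ∀ y ∈ cantorSet, y < 1/2 → 3 * y ∈ cantorSet := by
    intro y hy hylt
    rcases cantor_dichotomy' hy with ⟨_, h⟩ | ⟨h, _⟩
    · exact h
    · linarith
  rcases hgap with hgap | hgap
  · left
    ext y
    simp only [Set.mem_inter_iff, Set.mem_Ioo, Set.mem_empty_iff_false, iff_false, not_and]
    rintro ⟨hy1, hy2⟩ hyC
    have hmin1 : min (ε/3) (1/6) ≤ ε/3 := min_le_left _ _
    have hy3 : 3 * y ∈ cantorSet := key y hyC (by
      have := min_le_right (ε/3) (1/6)
      linarith)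
    have : 3 * y ∈ Set.Ioo (c - ε) c ∩ cantorSet := ⟨⟨by linarith, by linarith⟩, hy3⟩
    rw [hgap] at this
    exact this
  · right
    ext y
    simp only [Set.mem_inter_iff, Set.mem_Ioo, Set.mem_empty_iff_false, iff_false, not_and]
    rintro ⟨hy1, hy2⟩ hyC
    have hmin1 : min (ε/3) (1/6) ≤ ε/3 := min_le_left _ _
    have hmin2 : min (ε/3) (1/6) ≤ 1/6 := min_le_right _ _
    have hy3 : 3 * y ∈ cantorSet := key y hyC (by linarith)
    have : 3 * y ∈ Set.Ioo c (c + ε) ∩ cantorSet := ⟨⟨by linarith, by linarith⟩, hy3⟩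
    rw [hgap] at this
    exact this

lemma cantorEndpoints_two_add_third {c : ℝ} (hc : c ∈ cantorEndpoints) :
    (2 + c) / 3 ∈ cantorEndpoints := by
  obtain ⟨hcC, ε, hε, hgap⟩ := hc
  have h1 := (cantorSet_subset_unitInterval hcC).1
  have h2 := (cantorSet_subset_unitInterval hcC).2
  refine ⟨two_add_third_mem_cantorSet' hcC, min (ε/3) (1/6), by positivity, ?_⟩
  have key : ∀ y ∈ cantorSet, 1/2 < y → 3 * y - 2 ∈ cantorSet := by
    intro y hy hylt
    rcases cantor_dichotomy' hy with ⟨h, _⟩ | ⟨_, h⟩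
    · linarith
    · exact h
  rcases hgap with hgap | hgap
  · left
    ext y
    simp only [Set.mem_inter_iff, Set.mem_Ioo, Set.mem_empty_iff_false, iff_false, not_and]
    rintro ⟨hy1, hy2⟩ hyC
    have hmin1 : min (ε/3) (1/6) ≤ ε/3 := min_le_left _ _
    have hmin2 : min (ε/3) (1/6) ≤ 1/6 := min_le_right _ _
    have hy3 : 3 * y - 2 ∈ cantorSet := key y hyC (by linarith)
    have : 3 * y - 2 ∈ Set.Ioo (c - ε) c ∩ cantorSet := ⟨⟨by linarith, by linarith⟩, hy3⟩
    rw [hgap] at this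
    exact this
  · right
    ext y
    simp only [Set.mem_inter_iff, Set.mem_Ioo, Set.mem_empty_iff_false, iff_false, not_and]
    rintro ⟨hy1, hy2⟩ hyC
    have hmin1 : min (ε/3) (1/6) ≤ ε/3 := min_le_left _ _
    have hy3 : 3 * y - 2 ∈ cantorSet := key y hyC (by linarith)
    have : 3 * y - 2 ∈ Set.Ioo c (c + ε) ∩ cantorSet := ⟨⟨by linarith, by linarith⟩, hy3⟩
    rw [hgap] at this
    exact this

lemma cantor_sandwich (n : ℕ) : ∀ c ∈ cantorSet, ∃ a b : ℝ,
    a ∈ cantorEndpoints ∧ b ∈ cantorEndpoints ∧ a ≤ c ∧ c ≤ b ∧ b - a = (1/3)^n := by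
  induction n with
  | zero =>
    intro c hc
    exact ⟨0, 1, zero_mem_cantorEndpoints, one_mem_cantorEndpoints,
      (cantorSet_subset_unitInterval hc).1, (cantorSet_subset_unitInterval hc).2, by norm_num⟩
  | succ n ih =>
    intro c hc
    rcases cantor_dichotomy' hc with ⟨_, h3c⟩ | ⟨_, h3c⟩
    · obtain ⟨a, b, ha, hb, hac, hcb, hab⟩ := ih _ h3c
      exact ⟨a/3, b/3, cantorEndpoints_third ha, cantorEndpoints_third hb,
        by linarith, by linarith, by rw [pow_succ]; linarith⟩
    · obtain ⟨a, b, ha, hb, hac, hcb, hab⟩ := ih _ h3c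
      exact ⟨(2+a)/3, (2+b)/3, cantorEndpoints_two_add_third ha,
        cantorEndpoints_two_add_third hb, by linarith, by linarith,
        by rw [pow_succ]; linarith⟩

lemma cantorEndpoints_dense_aux {c : ℝ} (hc : c ∈ cantorSet) {ε : ℝ} (hε : 0 < ε) :
    ∃ a ∈ cantorEndpoints, |c - a| < ε := by
  obtain ⟨n, hn⟩ := exists_pow_lt_of_lt_one hε (by norm_num : (1/3 : ℝ) < 1)
  obtain ⟨a, b, ha, hb, hac, hcb, hab⟩ := cantor_sandwich n c hc
  refine ⟨a, ha, ?_⟩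
  rw [abs_of_nonneg (by linarith)]
  linarith

lemma cantor_accPt {c : ℝ} (hc : c ∈ cantorSet) {ε : ℝ} (hε : 0 < ε) :
    ∃ a ∈ cantorSet, a ≠ c ∧ |c - a| < ε := by
  obtain ⟨n, hn⟩ := exists_pow_lt_of_lt_one hε (by norm_num : (1/3 : ℝ) < 1)
  obtain ⟨a, b, ha, hb, hac, hcb, hab⟩ := cantor_sandwich n c hc
  have hpow : (0:ℝ) < (1/3)^n := by positivity
  by_cases hca : a = c
  · refine ⟨b, hb.1, fun h => by rw [h, ← hca] at hab; linarith, ?_⟩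
    rw [abs_of_nonpos (by linarith)]
    linarith
  · refine ⟨a, ha.1, hca, ?_⟩
    rw [abs_of_nonneg (by linarith)]
    linarith

lemma cantorEndpoints_countable : cantorEndpoints.Countable := by
  have hsub : cantorEndpoints ⊆ ⋃ q : ℚ,
      ({c : ℝ | c ∈ cantorSet ∧ c < (q:ℝ) ∧ Set.Ioo c (q:ℝ) ∩ cantorSet = ∅} ∪
       {c : ℝ | c ∈ cantorSet ∧ (q:ℝ) < c ∧ Set.Ioo (q:ℝ) c ∩ cantorSet = ∅}) := by
    rintro c ⟨hcC, ε, hε, hgap | hgap⟩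
    · obtain ⟨q, hq1, hq2⟩ := exists_rat_btwn (show c - ε < c by linarith)
      refine Set.mem_iUnion.2 ⟨q, Or.inr ⟨hcC, hq2, ?_⟩⟩
      apply Set.eq_empty_of_subset_empty
      rw [← hgap]
      exact Set.inter_subset_inter_left _ (Set.Ioo_subset_Ioo (le_of_lt hq1) le_rfl)
    · obtain ⟨q, hq1, hq2⟩ := exists_rat_btwn (show c < c + ε by linarith)
      refine Set.mem_iUnion.2 ⟨q, Or.inl ⟨hcC, hq1, ?_⟩⟩
      apply Set.eq_empty_of_subset_empty
      rw [← hgap]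
      exact Set.inter_subset_inter_left _ (Set.Ioo_subset_Ioo le_rfl (le_of_lt hq2))
  refine Set.Countable.mono hsub (Set.countable_iUnion fun q => Set.Countable.union ?_ ?_)
  · refine Set.Subsingleton.countable fun c hc c' hc' => ?_
    by_contra hne
    rcases lt_or_gt_of_ne hne with h | h
    · have : c' ∈ Set.Ioo c (q:ℝ) ∩ cantorSet := ⟨⟨h, hc'.2.1⟩, hc'.1⟩
      rw [hc.2.2] at this; exact this
    · have : c ∈ Set.Ioo c' (q:ℝ) ∩ cantorSet := ⟨⟨h, hc.2.1⟩, hc.1⟩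
      rw [hc'.2.2] at this; exact this
  · refine Set.Subsingleton.countable fun c hc c' hc' => ?_
    by_contra hne
    rcases lt_or_gt_of_ne hne with h | h
    · have : c ∈ Set.Ioo (q:ℝ) c' ∩ cantorSet := ⟨⟨hc.2.1, h⟩, hc.1⟩
      rw [hc'.2.2] at this; exact this
    · have : c' ∈ Set.Ioo (q:ℝ) c ∩ cantorSet := ⟨⟨hc'.2.1, h⟩, hc'.1⟩
      rw [hc.2.2] at this; exact this

end Aux

/-- If `Z` is a Gδ subset of `C × (0,1)` (subspace topology) containing `X₁`, then some fiber
`{c} × (0,1)` over a non-endpoint `c ∈ C''` is entirely contained in `Z`. -/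
theorem stmt13 (Z : Set (ℝ × ℝ)) (hZsub : Z ⊆ cantorSet ×ˢ Set.Ioo (0 : ℝ) 1)
    (hX1 : X1 ⊆ Z)
    (hZGδ : IsGδ (Subtype.val ⁻¹' Z : Set ↥(cantorSet ×ˢ Set.Ioo (0 : ℝ) 1))) :
    ∃ c ∈ cantorNonEndpoints, {c} ×ˢ Set.Ioo (0 : ℝ) 1 ⊆ Z := by
  classical
  obtain ⟨f, hfopen, hfeq⟩ := isGδ_iff_eq_iInter_nat.1 hZGδ
  choose V hVopen hVeq using fun n => isOpen_induced_iff.1 (hfopen n)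
  -- membership in Z is equivalent to membership in all V n, for points of C × (0,1)
  have Zmem : ∀ p : ℝ × ℝ, p ∈ cantorSet ×ˢ Set.Ioo (0:ℝ) 1 → (p ∈ Z ↔ ∀ n, p ∈ V n) := by
    intro p hp
    have h1 : (⟨p, hp⟩ : ↥(cantorSet ×ˢ Set.Ioo (0:ℝ) 1)) ∈ Subtype.val ⁻¹' Z ↔
        ∀ n, (⟨p, hp⟩ : ↥(cantorSet ×ˢ Set.Ioo (0:ℝ) 1)) ∈ f n := by
      rw [hfeq]; exact Set.mem_iInter
    have h2 : ∀ n, ((⟨p, hp⟩ : ↥(cantorSet ×ˢ Set.Ioo (0:ℝ) 1)) ∈ f n ↔ p ∈ V n) := by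
      intro n; rw [← hVeq n]; rfl
    simpa [h2] using h1
  haveI : CompleteSpace ↥cantorSet := isClosed_cantorSet.completeSpace_coe
  haveI : Nonempty ↥cantorSet := ⟨⟨0, zero_mem_cantorSet⟩⟩
  -- the endpoints are dense in the Cantor set
  have hdense : Dense (Subtype.val ⁻¹' cantorEndpoints : Set ↥cantorSet) := by
    intro x
    rw [closure_subtype]
    have himg : (Subtype.val '' (Subtype.val ⁻¹' cantorEndpoints : Set ↥cantorSet))
        = cantorEndpoints := by
      rw [Subtype.image_preimage_coe]
      exact Set.inter_eq_self_of_subset_right fun c hc => hc.1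
    rw [himg, Metric.mem_closure_iff]
    intro ε hε
    obtain ⟨a, ha, hlt⟩ := cantorEndpoints_dense_aux x.2 hε
    exact ⟨a, ha, by rwa [Real.dist_eq]⟩
  -- the "bad" sets
  set bad : ℕ × ℚ → Set ↥cantorSet := fun p =>
    {x : ↥cantorSet | ((p.2:ℝ)) ∈ Set.Ioo (0:ℝ) 1 ∧ ((x:ℝ), (p.2:ℝ)) ∉ V p.1} with hbad
  have hbadND : ∀ p : ℕ × ℚ, IsNowhereDense (bad p) := by
    rintro ⟨n, q⟩
    by_cases hq : ((q:ℝ)) ∈ Set.Ioo (0:ℝ) 1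
    · have heq : bad (n, q) = (fun x : ↥cantorSet => ((x:ℝ), (q:ℝ))) ⁻¹' (V n)ᶜ := by
        ext x
        constructor
        · rintro ⟨_, h⟩; exact h
        · intro h; exact ⟨hq, h⟩
      have hclosed : IsClosed (bad (n, q)) := by
        rw [heq]
        exact ((hVopen n).isClosed_compl).preimage
          (continuous_subtype_val.prodMk continuous_const)
      rw [hclosed.isNowhereDense_iff]
      by_contra hne
      obtain ⟨x, hx⟩ := Set.nonempty_iff_ne_empty.2 hne
      obtain ⟨e, he, heo⟩ := hdense.exists_mem_open isOpen_interior ⟨x, hx⟩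
      have hebad : e ∈ bad (n, q) := interior_subset heo
      have heC : ((e:ℝ), (q:ℝ)) ∈ cantorSet ×ˢ Set.Ioo (0:ℝ) 1 := ⟨e.2, hq⟩
      have heZ : ((e:ℝ), (q:ℝ)) ∈ Z :=
        hX1 (Or.inl ⟨he, ⟨q, rfl⟩, hq⟩)
      exact hebad.2 ((Zmem _ heC).1 heZ n)
    · have heq : bad (n, q) = ∅ := by
        ext x
        exact iff_of_false (fun h => hq h.1) (Set.notMem_empty x)
      rw [heq]
      exact isNowhereDense_empty
  -- singletons are nowhere dense
  have hsingND : ∀ x : ↥cantorSet, IsNowhereDense ({x} : Set ↥cantorSet) := by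
    intro x
    rw [isClosed_singleton.isNowhereDense_iff]
    by_contra hne
    obtain ⟨y, hy⟩ := Set.nonempty_iff_ne_empty.2 hne
    have hyx : y = x := Set.mem_singleton_iff.1 (interior_subset hy)
    subst hyx
    have h1 : ({y} : Set ↥cantorSet) ∈ 𝓝 y := mem_interior_iff_mem_nhds.1 hy
    rw [nhds_subtype_eq_comap] at h1
    obtain ⟨t, ht, hsub⟩ := Filter.mem_comap.1 h1
    obtain ⟨ε, hε, hball⟩ := Metric.mem_nhds_iff.1 ht
    obtain ⟨a, haC, hane, hlt⟩ := cantor_accPt y.2 hε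
    have : (⟨a, haC⟩ : ↥cantorSet) ∈ Subtype.val ⁻¹' t := by
      apply hball
      rw [Metric.mem_ball, Real.dist_eq, abs_sub_comm]
      exact hlt
    have := hsub this
    rw [Set.mem_singleton_iff] at this
    exact hane (congrArg Subtype.val this)
  -- the meagre set to avoid
  set M : Set ↥cantorSet :=
    (Subtype.val ⁻¹' cantorEndpoints) ∪ ⋃ p : ℕ × ℚ, bad p with hM
  have hMeagre : IsMeagre M := by
    rw [isMeagre_iff_countable_union_isNowhereDense]
    refine ⟨Set.range bad ∪ (fun x : ↥cantorSet => ({x} : Set ↥cantorSet)) ''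
      (Subtype.val ⁻¹' cantorEndpoints), ?_, ?_, ?_⟩
    · rintro t (⟨p, rfl⟩ | ⟨x, _, rfl⟩)
      · exact hbadND p
      · exact hsingND x
    · exact (Set.countable_range bad).union
        ((cantorEndpoints_countable.preimage Subtype.val_injective).image _)
    · rintro x (hx | hx)
      · exact ⟨{x}, Or.inr ⟨x, hx, rfl⟩, rfl⟩
      · obtain ⟨p, hp⟩ := Set.mem_iUnion.1 hx
        exact ⟨bad p, Or.inl ⟨p, rfl⟩, hp⟩
  obtain ⟨x, hxM⟩ := (dense_of_mem_residual hMeagre).nonempty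
  rw [Set.mem_compl_iff, hM, Set.mem_union] at hxM
  push_neg at hxM
  obtain ⟨hxE, hxB⟩ := hxM
  have hxne : (x:ℝ) ∈ cantorNonEndpoints := ⟨x.2, hxE⟩
  refine ⟨(x:ℝ), hxne, ?_⟩
  rintro ⟨c', y⟩ ⟨hc', hy⟩
  rw [Set.mem_singleton_iff] at hc'
  subst hc'
  by_cases hrat : y ∈ Set.range ((↑) : ℚ → ℝ)
  · obtain ⟨q, rfl⟩ := hrat
    refine (Zmem ((x:ℝ), (q:ℝ)) ⟨x.2, hy⟩).2 fun n => ?_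
    by_contra hn
    exact hxB (Set.mem_iUnion.2 ⟨(n, q), ⟨hy, hn⟩⟩)
  · exact hX1 (Or.inr ⟨hxne, hy, hrat⟩)
end
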